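/- For p ∈ (1,∞) define g_p : ℝ → ℝ by g_p(x) := |x|^{p−2}x for x ≠ 0 and g_p(0) := 0. Then: (i) for every natural number l, the function g_p is l-times differentiable at every x ≠ 0, and there is a constant C = C(p,l) such that |g_p^{(l)}(x)| ≤ C|x|^{p−1−l} for all x ≠ 0; (ii) if moreover l < p−1, then g_p is l-times continuously differentiable on all of ℝ and the bound |g_p^{(l)}(x)| ≤ C|x|^{p−1−l} holds for every x ∈ ℝ. -/

import Mathlib

/-!
Write `g_p = sign · |x|^{p-1}` and consider the family `sign(x)^k |x|^a`. Away from `0` the sign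
is locally constant, so `(sign^k |x|^a)' = a sign^{k+1} |x|^{a-1}`; at `0` the same formula holds
as soon as `a > 1`, because the difference quotient `sign^{k+1} |t|^{a-1}` tends to `0`. Iterating,
`g_p^{(l)} = (p-1)(p-2)⋯(p-l) sign^{l+1} |x|^{p-1-l}`, which gives both the bound and, when
`l < p - 1`, continuity of all derivatives up to order `l` on `ℝ`.
-/

/-- The function `g_p(x) = |x|^{p-2} x` (with `g_p(0) = 0`; note that for `x = 0`
the product `|0|^{p-2} * 0` is `0` in any case). -/
noncomputable def gp (p : ℝ) (x : ℝ) : ℝ := |x| ^ (p - 2) * x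

open Filter Topology

noncomputable def signAbsRpow (k : ℕ) (a x : ℝ) : ℝ := (SignType.sign x : ℝ) ^ k * |x| ^ a

section
variable {k : ℕ} {a x : ℝ}

lemma gp_eq_signAbsRpow (p : ℝ) : gp p = signAbsRpow 1 (p - 1) := by
  funext x
  rcases eq_or_ne x 0 with rfl | hx
  · simp [gp, signAbsRpow]
  · rw [gp, signAbsRpow, pow_one, show p - 1 = p - 2 + 1 by ring,
      Real.rpow_add_one (abs_ne_zero.2 hx), mul_left_comm, sign_mul_abs]

lemma signAbsRpow_succ_zero (k : ℕ) (a : ℝ) : signAbsRpow (k + 1) a 0 = 0 := by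
  simp [signAbsRpow]

lemma signAbsRpow_zero (k : ℕ) (ha : a ≠ 0) : signAbsRpow k a 0 = 0 := by
  simp [signAbsRpow, Real.zero_rpow ha]

lemma abs_signAbsRpow_le (k : ℕ) (a x : ℝ) : |signAbsRpow k a x| ≤ |x| ^ a := by
  have hsign : |(SignType.sign x : ℝ)| ≤ 1 := by
    rcases lt_trichotomy x 0 with h | rfl | h <;> simp [*]
  rw [signAbsRpow, abs_mul, abs_pow, abs_of_nonneg (by positivity : (0:ℝ) ≤ |x| ^ a)]
  exact mul_le_of_le_one_left (by positivity) (pow_le_one₀ (abs_nonneg _) hsign)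

lemma abs_const_mul_signAbsRpow_le (c : ℝ) (k : ℕ) (a x : ℝ) :
    |c * signAbsRpow k a x| ≤ |c| * |x| ^ a :=
  (abs_mul _ _).trans_le (mul_le_mul_of_nonneg_left (abs_signAbsRpow_le _ _ _) (abs_nonneg c))

lemma signAbsRpow_eventuallyEq (k : ℕ) (a : ℝ) (hx : x ≠ 0) :
    signAbsRpow k a =ᶠ[𝓝 x] fun y ↦ (SignType.sign x : ℝ) ^ k * |y| ^ a := by
  filter_upwards [(continuousAt_sign_of_ne_zero hx).eventually_mem
    ((isOpen_discrete {SignType.sign x}).mem_nhds rfl)] with y hy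
  rw [signAbsRpow, Set.mem_singleton_iff.1 hy]

lemma hasDerivAt_signAbsRpow_of_ne (k : ℕ) (a : ℝ) (hx : x ≠ 0) :
    HasDerivAt (signAbsRpow k a) (a * signAbsRpow (k + 1) (a - 1) x) x := by
  have h := (((hasDerivAt_abs hx).rpow_const (Or.inl (abs_ne_zero.2 hx))).const_mul
    ((SignType.sign x : ℝ) ^ k)).congr_of_eventuallyEq (signAbsRpow_eventuallyEq k a hx)
  refine h.congr_deriv ?_
  rw [signAbsRpow]; ring

lemma tendsto_signAbsRpow_zero (k : ℕ) (ha : 0 < a) :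
    Tendsto (signAbsRpow k a) (𝓝 0) (𝓝 0) := by
  have h : Tendsto (fun y : ℝ ↦ |y| ^ a) (𝓝 0) (𝓝 0) := by
    simpa [Real.zero_rpow ha.ne'] using
      ((continuous_abs.rpow_const fun _ ↦ Or.inr ha.le).tendsto (0 : ℝ))
  exact squeeze_zero_norm (abs_signAbsRpow_le k a) h

lemma continuous_signAbsRpow (k : ℕ) (ha : 0 < a) : Continuous (signAbsRpow k a) := by
  refine continuous_iff_continuousAt.2 fun x ↦ ?_
  rcases eq_or_ne x 0 with rfl | hx
  · simpa [ContinuousAt, signAbsRpow_zero k ha.ne'] using tendsto_signAbsRpow_zero k ha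
  · exact (hasDerivAt_signAbsRpow_of_ne k a hx).continuousAt

lemma inv_mul_signAbsRpow (k : ℕ) (a : ℝ) (hx : x ≠ 0) :
    x⁻¹ * signAbsRpow k a x = signAbsRpow (k + 1) (a - 1) x := by
  have hx' : |x| ≠ 0 := abs_ne_zero.2 hx
  rw [inv_mul_eq_iff_eq_mul₀ hx, signAbsRpow, signAbsRpow, Real.rpow_sub_one hx',
    show ∀ s A : ℝ, x * (s ^ (k + 1) * (A / |x|)) = s ^ k * A * (s * x / |x|) by intros; ring,
    sign_mul_self, div_self hx', mul_one]

lemma hasDerivAt_signAbsRpow_zero (k : ℕ) (ha : 1 < a) :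
    HasDerivAt (signAbsRpow k a) 0 0 := by
  rw [hasDerivAt_iff_tendsto_slope_zero]
  refine ((tendsto_signAbsRpow_zero (k + 1) (sub_pos.2 ha)).mono_left
    nhdsWithin_le_nhds).congr' ?_
  filter_upwards [self_mem_nhdsWithin] with t ht
  rw [zero_add, signAbsRpow_zero k (by linarith), sub_zero, smul_eq_mul,
    inv_mul_signAbsRpow k a ht]

lemma contDiffAt_signAbsRpow (n : ℕ∞) (k : ℕ) (a : ℝ) (hx : x ≠ 0) :
    ContDiffAt ℝ n (signAbsRpow k a) x :=
  (contDiffAt_const.mul ((contDiffAt_abs hx).rpow_const_of_ne (abs_ne_zero.2 hx))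
    ).congr_of_eventuallyEq (signAbsRpow_eventuallyEq k a hx)

lemma hasDerivAt_signAbsRpow (k : ℕ) (ha : 1 < a) (x : ℝ) :
    HasDerivAt (signAbsRpow k a) (a * signAbsRpow (k + 1) (a - 1) x) x := by
  rcases eq_or_ne x 0 with rfl | hx
  · simpa [signAbsRpow_succ_zero] using hasDerivAt_signAbsRpow_zero k ha
  · exact hasDerivAt_signAbsRpow_of_ne k a hx

lemma iteratedDeriv_succ_eq_of_signAbsRpow {f : ℝ → ℝ} {l : ℕ}
    (hf : iteratedDeriv l f =ᶠ[𝓝 x]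
      fun y ↦ (descPochhammer ℝ l).eval a * signAbsRpow (k + l) (a - l) y)
    (hd : HasDerivAt (signAbsRpow (k + l) (a - l))
      ((a - l) * signAbsRpow (k + l + 1) (a - l - 1) x) x) :
    iteratedDeriv (l + 1) f x =
      (descPochhammer ℝ (l + 1)).eval a * signAbsRpow (k + (l + 1)) (a - (l + 1 : ℕ)) x := by
  rw [iteratedDeriv_succ, hf.deriv_eq, (hd.const_mul _).deriv, descPochhammer_succ_eval,
    Nat.cast_succ, ← add_assoc, sub_add_eq_sub_sub, mul_assoc]

lemma iteratedDeriv_signAbsRpow_of_ne (k : ℕ) (a : ℝ) (l : ℕ) (hx : x ≠ 0) :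
    iteratedDeriv l (signAbsRpow k a) x =
      (descPochhammer ℝ l).eval a * signAbsRpow (k + l) (a - l) x := by
  induction l generalizing x with
  | zero => simp
  | succ l ih =>
    refine iteratedDeriv_succ_eq_of_signAbsRpow ?_ (hasDerivAt_signAbsRpow_of_ne _ _ hx)
    filter_upwards [isOpen_ne.mem_nhds hx] with y hy using ih hy

lemma iteratedDeriv_signAbsRpow (k : ℕ) {l : ℕ} (hl : (l : ℝ) < a) :
    iteratedDeriv l (signAbsRpow k a) =
      fun x ↦ (descPochhammer ℝ l).eval a * signAbsRpow (k + l) (a - l) x := by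
  induction l with
  | zero => simp
  | succ l ih =>
    push_cast at hl
    funext x
    exact iteratedDeriv_succ_eq_of_signAbsRpow (ih (by linarith)).eventuallyEq
      (hasDerivAt_signAbsRpow _ (by linarith) x)

lemma contDiff_signAbsRpow (k : ℕ) {l : ℕ} (hl : (l : ℝ) < a) :
    ContDiff ℝ l (signAbsRpow k a) := by
  refine contDiff_iff_iteratedDeriv.2 ⟨fun m hm ↦ ?_, fun m hm ↦ ?_⟩
  · have hm : (m : ℝ) ≤ l := by exact_mod_cast hm
    rw [iteratedDeriv_signAbsRpow k (by linarith)]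
    exact continuous_const.mul (continuous_signAbsRpow _ (by linarith))
  · have hm : ((m + 1 : ℕ) : ℝ) ≤ l := by exact_mod_cast hm
    push_cast at hm
    rw [iteratedDeriv_signAbsRpow k (by linarith)]
    exact fun x ↦ ((hasDerivAt_signAbsRpow _ (by linarith) x).const_mul _).differentiableAt

end

theorem stmt19_general (p : ℝ) :
    (∀ l : ℕ, ∃ C : ℝ, ∀ x : ℝ, x ≠ 0 →
        ContDiffAt ℝ l (gp p) x ∧ |iteratedDeriv l (gp p) x| ≤ C * |x| ^ (p - 1 - l)) ∧
    (∀ l : ℕ, (l : ℝ) < p - 1 → ∃ C : ℝ,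
        ContDiff ℝ l (gp p) ∧ ∀ x : ℝ, |iteratedDeriv l (gp p) x| ≤ C * |x| ^ (p - 1 - l)) := by
  rw [gp_eq_signAbsRpow]
  refine ⟨fun l ↦ ⟨|(descPochhammer ℝ l).eval (p - 1)|, fun x hx ↦
      ⟨contDiffAt_signAbsRpow l 1 _ hx, ?_⟩⟩,
    fun l hl ↦ ⟨|(descPochhammer ℝ l).eval (p - 1)|, contDiff_signAbsRpow 1 hl, fun x ↦ ?_⟩⟩
  · rw [iteratedDeriv_signAbsRpow_of_ne 1 _ l hx]
    exact abs_const_mul_signAbsRpow_le _ _ _ x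
  · rw [iteratedDeriv_signAbsRpow 1 hl]
    exact abs_const_mul_signAbsRpow_le _ _ _ x

/-- regularity of `g_p`.
For `p ∈ (1,∞)`: (i) for every `l : ℕ`, `g_p` is `l`-times differentiable at every
`x ≠ 0` and `|g_p^{(l)}(x)| ≤ C |x|^{p−1−l}` there, with `C = C(p,l)`;
(ii) if `l < p − 1`, then `g_p ∈ C^l(ℝ)` and the bound holds for all `x ∈ ℝ`. -/
theorem stmt19 (p : ℝ) (hp : 1 < p) :
    (∀ l : ℕ, ∃ C : ℝ, ∀ x : ℝ, x ≠ 0 →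
        ContDiffAt ℝ l (gp p) x ∧ |iteratedDeriv l (gp p) x| ≤ C * |x| ^ (p - 1 - l)) ∧
    (∀ l : ℕ, (l : ℝ) < p - 1 → ∃ C : ℝ,
        ContDiff ℝ l (gp p) ∧ ∀ x : ℝ, |iteratedDeriv l (gp p) x| ≤ C * |x| ^ (p - 1 - l)) :=
  stmt19_general p
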